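/- Let E[W_n] = (a/g_n)·∑_{j=1}^{n} g_j + W₀/g_n where g_n = Γ(n + t)·Γ(t + λ)/(Γ(t)·Γ(n + t + λ)) with t = T₀/σ > 0 and λ = Λ = m(a_{m−1}−a_m)/σ < 1, a = a_m. Then the closed form E[W_n] = a·(n + t)/(1 − λ) + (W₀ − a·t/(1−λ))·C(n−1+t+λ, n)/C(n−1+t, n) holds, where C(z,n) is the generalized binomial coefficient. -/

import Mathlib

open Finset Polynomial

/-- Generalized binomial coefficient `C(z,n) = z(z-1)⋯(z-n+1)/n!` for real `z`. -/
noncomputable def genChoose (z : ℝ) (n : ℕ) : ℝ :=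
  (descPochhammer ℝ n).eval z / n.factorial

/-!
Writing `(x)ₙ = x(x+1)⋯(x+n-1)`, both `g n = (t)ₙ / (t+λ)ₙ` and
`C(n-1+x, n) = (x)ₙ / n!`, so the ratio of binomial coefficients is `1 / g n`. The recurrence
`(t+λ+n) g (n+1) = (t+n) g n` makes `(1-λ) g (n+1)` the difference of consecutive terms of
`(t+n) g n`, so `(1-λ) ∑_{j=1}^n g j = (t+n) g n - t` by telescoping.
-/

theorem Real.Gamma_add_nat_eq_ascPochhammer_mul {x : ℝ} (hx : ∀ k : ℕ, x ≠ -k) (n : ℕ) :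
    Real.Gamma (x + n) = (ascPochhammer ℝ n).eval x * Real.Gamma x := by
  induction n with
  | zero => simp
  | succ n ih =>
    have hxn : x + n ≠ 0 := fun h => hx n (eq_neg_of_add_eq_zero_left h)
    rw [Nat.cast_succ, ← add_assoc, Real.Gamma_add_one hxn, ih, ascPochhammer_succ_right,
      eval_mul, eval_add, eval_X, eval_natCast]
    ring

theorem genChoose_natCast_sub_one_add (x : ℝ) (n : ℕ) :
    genChoose ((n : ℝ) - 1 + x) n = (ascPochhammer ℝ n).eval x / n.factorial := by
  rw [genChoose, descPochhammer_eval_eq_ascPochhammer]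
  congr 2
  ring

theorem ascPochhammer_div_recurrence (t : ℝ) {s : ℝ} {n : ℕ} (hs : s + n ≠ 0) :
    (s + n) * ((ascPochhammer ℝ (n + 1)).eval t / (ascPochhammer ℝ (n + 1)).eval s)
      = (t + n) * ((ascPochhammer ℝ n).eval t / (ascPochhammer ℝ n).eval s) := by
  simp only [ascPochhammer_succ_right, eval_mul, eval_add, eval_X, eval_natCast]
  rw [mul_div_assoc', mul_comm (s + n), mul_div_mul_right _ _ hs]
  ring

theorem one_sub_mul_sum_Icc_of_recurrence {g : ℕ → ℝ} {t lam : ℝ} (h₀ : g 0 = 1)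
    (hrec : ∀ n : ℕ, (t + lam + n) * g (n + 1) = (t + n) * g n) (n : ℕ) :
    (1 - lam) * ∑ j ∈ Icc 1 n, g j = (t + n) * g n - t := by
  induction n with
  | zero => simp [h₀]
  | succ n ih =>
    rw [sum_Icc_succ_top (Nat.le_add_left 1 n), mul_add, ih]
    push_cast
    linear_combination -hrec n

/-- Closed form of the expectation: if `E[W_n] = (a/g_n)·∑_{j=1}^n g_j + W₀/g_n` with
`g_n = Γ(n+t)Γ(t+λ)/(Γ(t)Γ(n+t+λ))`, `t > 0`, `λ < 1`, `t + λ > 0`, then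
`E[W_n] = a(n+t)/(1-λ) + (W₀ - a·t/(1-λ))·C(n-1+t+λ,n)/C(n-1+t,n)`. -/
theorem expectation_closed_form (t lam a W₀ : ℝ) (ht : 0 < t) (hlam : lam < 1)
    (htlam : 0 < t + lam) (g Ew : ℕ → ℝ)
    (hg : ∀ n, g n = Real.Gamma (n + t) * Real.Gamma (t + lam)
        / (Real.Gamma t * Real.Gamma (n + t + lam)))
    (hEw : ∀ n, Ew n = (a / g n) * ∑ j ∈ Icc 1 n, g j + W₀ / g n) :
    ∀ n : ℕ, Ew n = a * (n + t) / (1 - lam)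
        + (W₀ - a * t / (1 - lam))
          * genChoose ((n : ℝ) - 1 + t + lam) n / genChoose ((n : ℝ) - 1 + t) n := by
  have ne_neg_natCast {x : ℝ} (hx : 0 < x) (k : ℕ) : x ≠ -k := by
    have := k.cast_nonneg (α := ℝ); linarith
  have hg_poch (n : ℕ) :
      g n = (ascPochhammer ℝ n).eval t / (ascPochhammer ℝ n).eval (t + lam) := by
    rw [hg, add_comm (n : ℝ), add_right_comm,
      Real.Gamma_add_nat_eq_ascPochhammer_mul (ne_neg_natCast ht),
      Real.Gamma_add_nat_eq_ascPochhammer_mul (ne_neg_natCast htlam)]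
    have hΓt := (Real.Gamma_pos_of_pos ht).ne'
    have hΓtlam := (Real.Gamma_pos_of_pos htlam).ne'
    field_simp
  have hsum := one_sub_mul_sum_Icc_of_recurrence (g := g) (by simp [hg_poch])
    (fun n => by rw [hg_poch, hg_poch]; exact ascPochhammer_div_recurrence t (by positivity))
  intro n
  have hratio : genChoose ((n : ℝ) - 1 + t + lam) n / genChoose ((n : ℝ) - 1 + t) n
      = (g n)⁻¹ := by
    rw [add_assoc _ t, genChoose_natCast_sub_one_add, genChoose_natCast_sub_one_add, hg_poch]
    field_simp
  have hg_ne : g n ≠ 0 := by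
    rw [hg_poch]
    exact div_ne_zero (ascPochhammer_pos n t ht).ne' (ascPochhammer_pos n _ htlam).ne'
  have h1lam : 1 - lam ≠ 0 := by linarith
  rw [hEw, mul_div_assoc (W₀ - _), hratio]
  field_simp
  linear_combination a * hsum n
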